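/- arXiv:2408.13951 — 6 statements merged into one kernel-verified Lean document; each statement's English description precedes it below -/
import Mathlib

section
/- Let ℓ ∈ ℕ, let (c_1,…,c_ℓ) ∈ ℕ^ℓ and (d_1,…,d_{ℓ+1}) ∈ ℕ^{ℓ+1} satisfy ∑_{i=1}^{ℓ} c_i = ∑_{j=1}^{ℓ+1} d_j, and suppose that a_n := ((c_1 n)! ⋯ (c_ℓ n)!)/((d_1 n)! ⋯ (d_{ℓ+1} n)!) is an integer for every n ≥ 0. Then for every prime number p and every integer n ≥ 1, one has a_{np} ≡ a_n (mod p). -/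
open Finset

/-- Product of the integers in `[1, m*p]` not divisible by `p`. -/
private def fpr (p m : ℕ) : ℕ :=
  ∏ k ∈ Finset.Ico 1 (m * p + 1), if p ∣ k then 1 else k

private lemma block_not_dvd {p m r : ℕ} (hr : r ∈ Finset.Ico 1 p) : ¬ p ∣ (m * p + r) := by
  rw [Finset.mem_Ico] at hr
  intro h
  have h2 : p ∣ r := (Nat.dvd_add_right (dvd_mul_left p m)).mp h
  exact absurd (Nat.le_of_dvd (by omega) h2) (by omega)

private lemma factorial_add (n t : ℕ) :
    (n + t).factorial = n.factorial * ∏ r ∈ Finset.Ico 1 (t + 1), (n + r) := by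
  induction t with
  | zero => simp
  | succ t ih =>
    rw [Finset.prod_Ico_succ_top (by omega), show n + (t + 1) = (n + t) + 1 from rfl,
      Nat.factorial_succ, ih]
    ring

private lemma prod_Ico_shift {M : Type*} [CommMonoid M] (f : ℕ → M) (n a b : ℕ) :
    ∏ k ∈ Finset.Ico (n + a) (n + b), f k = ∏ r ∈ Finset.Ico a b, f (n + r) := by
  rw [Finset.prod_Ico_eq_prod_range, Finset.prod_Ico_eq_prod_range]
  rw [Nat.add_sub_add_left]
  exact Finset.prod_congr rfl fun i _ => by rw [add_assoc]

private lemma fpr_succ (p m : ℕ) :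
    fpr p (m + 1) = fpr p m *
      ∏ r ∈ Finset.Ico 1 (p + 1), (if p ∣ (m * p + r) then 1 else m * p + r) := by
  unfold fpr
  rw [show (m + 1) * p + 1 = m * p + p + 1 by ring,
    ← Finset.prod_Ico_consecutive (fun k => if p ∣ k then 1 else k)
      (show 1 ≤ m * p + 1 by omega) (show m * p + 1 ≤ m * p + p + 1 by omega)]
  congr 1
  have := prod_Ico_shift (fun k => if p ∣ k then 1 else k) (m * p) 1 (p + 1)
  rw [show m * p + (p + 1) = m * p + p + 1 by ring] at this
  exact this

private lemma factorial_eq (p : ℕ) (hp : p.Prime) (m : ℕ) :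
    (m * p).factorial = p ^ m * m.factorial * fpr p m := by
  induction m with
  | zero => simp [fpr]
  | succ m ih =>
    have hp1 : 1 ≤ p := hp.one_lt.le
    rw [show (m + 1) * p = m * p + p by ring, factorial_add, ih, fpr_succ]
    rw [Finset.prod_Ico_succ_top hp1 (f := fun r => m * p + r),
      Finset.prod_Ico_succ_top hp1 (f := fun r => if p ∣ m * p + r then 1 else m * p + r)]
    have h1 : (if p ∣ (m * p + p) then 1 else m * p + p) = 1 := by
      rw [if_pos ⟨m + 1, by ring⟩]
    have h2 : (∏ r ∈ Finset.Ico 1 p, (if p ∣ (m * p + r) then 1 else m * p + r))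
        = ∏ r ∈ Finset.Ico 1 p, (m * p + r) :=
      Finset.prod_congr rfl fun r hr => if_neg (block_not_dvd hr)
    rw [h1, h2, Nat.factorial_succ, pow_succ]
    have h3 : m * p + p = p * (m + 1) := by ring
    rw [h3]
    ring

private lemma fpr_cast (p : ℕ) (hp : p.Prime) (m : ℕ) :
    ((fpr p m : ZMod p)) = (-1) ^ m := by
  haveI := Fact.mk hp
  induction m with
  | zero => simp [fpr]
  | succ m ih =>
    have hp1 : 1 ≤ p := hp.one_lt.le
    rw [fpr_succ, Nat.cast_mul, ih, pow_succ]
    congr 1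
    rw [Nat.cast_prod, Finset.prod_Ico_succ_top hp1]
    have h1 : ((if p ∣ (m * p + p) then 1 else m * p + p : ℕ) : ZMod p) = 1 := by
      rw [if_pos ⟨m + 1, by ring⟩]; norm_num
    have h2 : (∏ r ∈ Finset.Ico 1 p, ((if p ∣ (m * p + r) then 1 else m * p + r : ℕ) : ZMod p))
        = ∏ r ∈ Finset.Ico 1 p, ((r : ℕ) : ZMod p) := by
      refine Finset.prod_congr rfl fun r hr => ?_
      rw [if_neg (block_not_dvd hr)]
      push_cast
      simp [ZMod.natCast_self]
    rw [h1, h2, mul_one, ← Nat.cast_prod]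
    have hw := Finset.prod_Ico_id_eq_factorial (p - 1)
    rw [show p - 1 + 1 = p by omega] at hw
    rw [hw, ZMod.wilsons_lemma]

/-- **Theorem 2.** Let `(c_1, …, c_ℓ) ∈ ℕ^ℓ` and `(d_1, …, d_{ℓ+1}) ∈ ℕ^{ℓ+1}` with
`∑ c_i = ∑ d_j`, and suppose the factorial ratio
`a_n = ((c_1 n)! ⋯ (c_ℓ n)!)/((d_1 n)! ⋯ (d_{ℓ+1} n)!)` is an integer for every `n`
(formalized by an integer sequence `a : ℕ → ℤ` whose values equal the factorial ratios in `ℚ`).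
Then for every prime `p` and every `n ≥ 1`, `a_{np} ≡ a_n (mod p)`. -/
theorem factorial_ratio_congruences
    (ℓ : ℕ) (c : Fin ℓ → ℕ) (d : Fin (ℓ + 1) → ℕ)
    (hsum : ∑ i, c i = ∑ j, d j)
    (a : ℕ → ℤ)
    (ha : ∀ n : ℕ, (a n : ℚ) =
      (∏ i, ((c i * n).factorial : ℚ)) / ∏ j, ((d j * n).factorial : ℚ))
    (p : ℕ) (hp : p.Prime) (n : ℕ) (hn : 1 ≤ n) :
    (p : ℤ) ∣ a (n * p) - a n := by
  haveI := Fact.mk hp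
  have key : ∀ m : ℕ, a m * ∏ j, ((d j * m).factorial : ℤ) = ∏ i, ((c i * m).factorial : ℤ) := by
    intro m
    have h := ha m
    have hD : (∏ j, ((d j * m).factorial : ℚ)) ≠ 0 :=
      Finset.prod_ne_zero_iff.mpr fun j _ => Nat.cast_ne_zero.mpr (Nat.factorial_ne_zero _)
    rw [eq_div_iff hD] at h
    exact_mod_cast h
  set S : ℕ := ∑ j, d j * n with hS
  have hSc : ∑ i, c i * n = S := by
    rw [hS, ← Finset.sum_mul, ← Finset.sum_mul, hsum]
  set D : ℤ := ∏ j, ((d j * n).factorial : ℤ) with hD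
  set C : ℤ := ∏ i, ((c i * n).factorial : ℤ) with hC
  set Fd : ℤ := ∏ j, (fpr p (d j * n) : ℤ) with hFd
  set Fc : ℤ := ∏ i, (fpr p (c i * n) : ℤ) with hFc
  have E1 : a n * D = C := key n
  have E2 : a (n * p) * ((p : ℤ) ^ S * D * Fd) = (p : ℤ) ^ S * C * Fc := by
    have h := key (n * p)
    have hd : ∀ j : Fin (ℓ + 1), ((d j * (n * p)).factorial : ℤ)
        = (p : ℤ) ^ (d j * n) * ((d j * n).factorial : ℤ) * (fpr p (d j * n) : ℤ) := by
      intro j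
      rw [← mul_assoc, factorial_eq p hp (d j * n)]
      push_cast
      ring
    have hc : ∀ i : Fin ℓ, ((c i * (n * p)).factorial : ℤ)
        = (p : ℤ) ^ (c i * n) * ((c i * n).factorial : ℤ) * (fpr p (c i * n) : ℤ) := by
      intro i
      rw [← mul_assoc, factorial_eq p hp (c i * n)]
      push_cast
      ring
    rw [Finset.prod_congr rfl (fun j _ => hd j), Finset.prod_congr rfl (fun i _ => hc i),
      Finset.prod_mul_distrib, Finset.prod_mul_distrib, Finset.prod_mul_distrib,
      Finset.prod_mul_distrib, Finset.prod_pow_eq_pow_sum, Finset.prod_pow_eq_pow_sum,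
      hSc] at h
    rw [← hS, ← hD, ← hC, ← hFd, ← hFc] at h
    linarith [h]
  have hpow : ((p : ℤ) ^ S) ≠ 0 := pow_ne_zero _ (by exact_mod_cast hp.ne_zero)
  have hDne : D ≠ 0 :=
    Finset.prod_ne_zero_iff.mpr fun j _ => Nat.cast_ne_zero.mpr (Nat.factorial_ne_zero _)
  have E3 : (a (n * p) * Fd) * D = (a n * Fc) * D := by
    apply mul_left_cancel₀ hpow
    linear_combination E2 - Fc * (p : ℤ) ^ S * E1
  have E4 : a (n * p) * Fd = a n * Fc := mul_right_cancel₀ hDne E3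
  have E5 : ((a (n * p) : ZMod p)) * (-1) ^ S = ((a n : ZMod p)) * (-1) ^ S := by
    have h := congrArg (fun z : ℤ => (z : ZMod p)) E4
    simp only [Int.cast_mul] at h
    have hfd : ((Fd : ZMod p)) = (-1) ^ S := by
      rw [hFd]
      push_cast
      rw [Finset.prod_congr rfl (fun j _ => fpr_cast p hp (d j * n)),
        Finset.prod_pow_eq_pow_sum]
    have hfc : ((Fc : ZMod p)) = (-1) ^ S := by
      rw [hFc]
      push_cast
      rw [Finset.prod_congr rfl (fun i _ => fpr_cast p hp (c i * n)),
        Finset.prod_pow_eq_pow_sum, hSc]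
    rw [hfd, hfc] at h
    exact h
  have E6 : ((a (n * p) : ZMod p)) = ((a n : ZMod p)) :=
    mul_right_cancel₀ (pow_ne_zero _ (neg_ne_zero.mpr one_ne_zero)) E5
  have : (((a (n * p) - a n : ℤ)) : ZMod p) = 0 := by
    push_cast
    rw [E6, sub_self]
  exact_mod_cast (ZMod.intCast_zmod_eq_zero_iff_dvd _ p).mp this
end

section
/- For every prime number p and every natural number m, there exists an integer α_m such that (mp)! = m! · (−p)^m · (1 + p α_m). -/
open Finset

private lemma factorial_add_eq (a : ℕ) : ∀ b : ℕ,
    (a + b).factorial = a.factorial * ∏ i ∈ range b, (a + 1 + i)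
  | 0 => by simp
  | b + 1 => by
    rw [prod_range_succ, ← mul_assoc, ← factorial_add_eq a b,
      ← Nat.add_assoc, Nat.factorial_succ]
    ring

/-- For every prime `p` and every `m ∈ ℕ`, there is an integer `α_m` such that
`(mp)! = m! · (-p)^m · (1 + p α_m)`. -/
theorem factorial_mul_prime_eq
    (p : ℕ) (hp : p.Prime) (m : ℕ) :
    ∃ α : ℤ, ((m * p).factorial : ℤ) =
      (m.factorial : ℤ) * (-(p : ℤ)) ^ m * (1 + (p : ℤ) * α) := by
  haveI : Fact p.Prime := ⟨hp⟩
  induction m with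
  | zero => exact ⟨0, by simp⟩
  | succ m ih =>
    obtain ⟨α, hα⟩ := ih
    set B : ℤ := ∏ i ∈ range (p - 1), ((m * p + 1 + i : ℤ)) with hB
    have hp1 : p - 1 + 1 = p := Nat.succ_pred_eq_of_pos hp.pos
    have hfac : (((m + 1) * p).factorial : ℤ) =
        ((m * p).factorial : ℤ) * B * ((m + 1) * p) := by
      have h1 : (m + 1) * p = m * p + p := by ring
      have h3 : ∏ i ∈ range p, (m * p + 1 + i)
          = (∏ i ∈ range (p - 1), (m * p + 1 + i)) * ((m + 1) * p) := by
        have h4 := Finset.prod_range_succ (fun i => m * p + 1 + i) (p - 1)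
        rw [hp1] at h4
        rw [h4]
        congr 1
        omega
      rw [h1, factorial_add_eq, h3, ← mul_assoc]
      push_cast [hB]
      ring
    -- B ≡ -1 mod p
    have hBmod : ((B : ZMod p)) = -1 := by
      rw [hB]
      push_cast
      have : ∀ i ∈ range (p - 1), ((m : ZMod p) * p + 1 + i) = (i + 1 : ℕ) := by
        intro i _
        push_cast
        rw [ZMod.natCast_self]
        ring
      rw [Finset.prod_congr rfl this, ← Nat.cast_prod,
        Finset.prod_range_add_one_eq_factorial]
      exact ZMod.wilsons_lemma p
    have hdvd : (p : ℤ) ∣ B + 1 := by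
      have : ((B + 1 : ℤ) : ZMod p) = 0 := by push_cast [hBmod]; ring
      exact (ZMod.intCast_zmod_eq_zero_iff_dvd _ _).mp this
    obtain ⟨β, hβ⟩ := hdvd
    have hBval : B = -1 + p * β := by linarith
    refine ⟨α - β - p * α * β, ?_⟩
    rw [hfac, hα, hBval, Nat.factorial_succ]
    push_cast
    ring
end

section
/- Let p be a prime, let (a_n)_{n≥1} be a sequence of integers, and let f(t) = ∑_{n≥1} a_n t^{n-1} ∈ ℤ[[t]]. Then the (p−1)-st formal derivative of f satisfies f^{(p-1)}(t) ≡ −∑_{n≥1} a_{np} t^{(n-1)p} (mod p), i.e., the reductions mod p of the two power series coincide coefficientwise. -/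
/-!
Differentiating `p - 1` times multiplies the coefficient `a_{k+p}` of `t^{k+p-1}` by
`(k + 1)(k + 2) ⋯ (k + p - 1)`. Modulo `p` these factors are `1, …, p - 1` when `p ∣ k`, with
product `-1` by Wilson's theorem, and otherwise one of them vanishes.
-/

open PowerSeries

theorem Nat.cast_succ_ascFactorial_pred_prime {p : ℕ} [Fact p.Prime] (k : ℕ) :
    ((k + 1).ascFactorial (p - 1) : ZMod p) = if p ∣ k then -1 else 0 := by
  rw [← ascPochhammer_nat_eq_natCast_ascFactorial, Nat.cast_succ]
  split_ifs with hk
  · rw [(ZMod.natCast_eq_zero_iff k p).mpr hk, zero_add, ascPochhammer_eval_one,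
      ZMod.wilsons_lemma]
  · -- `-(k + 1)` is one of the roots `0, -1, …, -(p - 2)` of the Pochhammer polynomial
    rw [ascPochhammer_eval_eq_zero_iff]
    refine ⟨(-((k : ZMod p) + 1)).val, ?_, ZMod.natCast_zmod_val _⟩
    refine lt_of_le_of_ne (Nat.le_sub_one_of_lt (ZMod.val_lt _)) fun hval => hk ?_
    have hneg : -((k : ZMod p) + 1) = -1 := by
      rw [← ZMod.natCast_zmod_val (-((k : ZMod p) + 1)), hval,
        Nat.cast_pred (Fact.out : p.Prime).pos, ZMod.natCast_self, zero_sub]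
    rw [← ZMod.natCast_eq_zero_iff]
    simpa using hneg

/-- Let `p` be prime, `(a_n)_{n ≥ 1}` integers and `f(t) = ∑_{n ≥ 1} a_n t^{n-1} ∈ ℤ[[t]]`.
Then `f^{(p-1)}(t) ≡ -∑_{n ≥ 1} a_{np} t^{(n-1)p} (mod p)` coefficientwise: the coefficient of
`t^k` of `f^{(p-1)}` is congruent mod `p` to `-a_{(k/p+1)p}` if `p ∣ k` and to `0` otherwise. -/
theorem iterated_derivative_mod_p
    (p : ℕ) (hp : p.Prime) (a : ℕ → ℤ)
    (f : PowerSeries ℤ) (hf : f = PowerSeries.mk fun k => a (k + 1)) :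
    ∀ k : ℕ,
      PowerSeries.coeff (R := ℤ) k ((fun g => PowerSeries.derivative ℤ g)^[p - 1] f) ≡
        (if p ∣ k then -a ((k / p + 1) * p) else 0) [ZMOD p] := by
  intro k
  have : Fact p.Prime := ⟨hp⟩
  rw [coeff_iterate_derivative, hf, coeff_mk, ← ZMod.intCast_eq_intCast_iff, Int.cast_mul,
    Int.cast_natCast, Nat.cast_succ_ascFactorial_pred_prime]
  split_ifs with hk
  · obtain ⟨c, rfl⟩ := hk
    have hindex : p * c + (p - 1) + 1 = (p * c / p + 1) * p := by
      rw [Nat.mul_div_cancel_left c hp.pos]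
      have := hp.one_le
      grind
    rw [hindex]
    push_cast
    ring
  · simp
end

section
/- Let p be a prime, let (a_n)_{n≥1} be a sequence of integers, and let f(t) = ∑_{n≥1} a_n t^{n-1} ∈ ℤ[[t]]. Then f^{(p-1)}(t) + f(t)^p ≡ 0 (mod p) as power series if and only if a_{np} ≡ a_n (mod p) for all n ≥ 1. (Equivalently, the p-curvature of the differential equation y' = f·y vanishes mod p exactly when these congruences hold.) -/
/-!
Reduce mod `p`. Over `ZMod p` the Frobenius is the identity, so `F ^ p` is the expansion
`F(t ^ p)`. The `(p - 1)`-st derivative multiplies the coefficient of `t ^ (k + p - 1)` by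
`(k + 1) ⋯ (k + p - 1)`, which is `(p - 1)! = -1` (Wilson) when `p ∣ k`, and `0` otherwise because
`k, k + 1, …, k + p - 1` run through all of `ZMod p`. Hence `F^{(p-1)} + F ^ p` has
coefficient `a_{m+1} - a_{(m+1)p}` at `t ^ (p m)` and vanishes in all other degrees.
-/

open PowerSeries

namespace PowerSeries

theorem map_iterate_derivative {R S : Type*} [CommRing R] [CommRing S] (φ : R →+* S)
    (f : R⟦X⟧) (n : ℕ) : map φ ((d⁄dX R)^[n] f) = (d⁄dX S)^[n] (map φ f) := by
  ext k
  simp [coeff_iterate_derivative]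

theorem pow_expChar_eq_map_frobenius_expand {R : Type*} [CommRing R] (p : ℕ) [ExpChar R p]
    (f : R⟦X⟧) : f ^ p = map (frobenius R p) (expand p (expChar_ne_zero R p) f) :=
  (MvPowerSeries.map_frobenius_expand p (expChar_ne_zero R p)).symm

end PowerSeries

section ZMod

variable {p : ℕ} [Fact p.Prime]

theorem ascPochhammer_eval_zmod_eq_zero (x : ZMod p) :
    (ascPochhammer (ZMod p) p).eval x = 0 := by
  rw [← ZMod.natCast_zmod_val x, ascPochhammer_nat_eq_natCast_ascFactorial,
    ZMod.natCast_eq_zero_iff]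
  exact (Nat.dvd_factorial (Fact.out : p.Prime).pos le_rfl).trans
    (Nat.factorial_dvd_ascFactorial _ _)

theorem ascPochhammer_pred_eval_add_one_zmod (x : ZMod p) :
    (ascPochhammer (ZMod p) (p - 1)).eval (x + 1) = if x = 0 then -1 else 0 := by
  split_ifs with hx
  · rw [hx, zero_add, ascPochhammer_eval_one, ZMod.wilsons_lemma]
  · have h : (ascPochhammer (ZMod p) (p - 1 + 1)).eval x = 0 := by
      rw [Nat.sub_add_cancel (Fact.out : p.Prime).one_le]
      exact ascPochhammer_eval_zmod_eq_zero x
    simp only [ascPochhammer_succ_left, Polynomial.eval_mul, Polynomial.eval_X,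
      Polynomial.eval_comp, Polynomial.eval_add, Polynomial.eval_one] at h
    exact (mul_eq_zero.mp h).resolve_left hx

namespace PowerSeries

theorem pow_eq_expand_zmod (F : (ZMod p)⟦X⟧) :
    F ^ p = expand p (Fact.out : p.Prime).ne_zero F := by
  rw [pow_expChar_eq_map_frobenius_expand p, ZMod.frobenius_zmod, map_id, id]

theorem coeff_iterate_derivative_pred_add_pow (F : (ZMod p)⟦X⟧) (k : ℕ) :
    coeff k ((d⁄dX (ZMod p))^[p - 1] F + F ^ p) =
      if p ∣ k then coeff (k / p) F - coeff (k + (p - 1)) F else 0 := by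
  rw [map_add, coeff_iterate_derivative, pow_eq_expand_zmod, coeff_expand,
    ← ascPochhammer_nat_eq_natCast_ascFactorial, Nat.cast_add, Nat.cast_one,
    ascPochhammer_pred_eval_add_one_zmod]
  simp only [ZMod.natCast_eq_zero_iff]
  split_ifs <;> ring

theorem iterate_derivative_pred_add_pow_eq_zero_iff (F : (ZMod p)⟦X⟧) :
    (d⁄dX (ZMod p))^[p - 1] F + F ^ p = 0 ↔ ∀ m, coeff (p * m + (p - 1)) F = coeff m F := by
  simp only [PowerSeries.ext_iff, map_zero, coeff_iterate_derivative_pred_add_pow]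
  constructor
  · intro h m
    have hm := h (p * m)
    rw [if_pos (dvd_mul_right p m), Nat.mul_div_cancel_left _ (Fact.out : p.Prime).pos] at hm
    exact (sub_eq_zero.mp hm).symm
  · intro h k
    split_ifs with hk
    · obtain ⟨m, rfl⟩ := hk
      rw [Nat.mul_div_cancel_left _ (Fact.out : p.Prime).pos, h m, sub_self]
    · rfl

end PowerSeries

end ZMod

/-- Let `p` be prime, `(a_n)_{n ≥ 1}` integers and `f(t) = ∑_{n ≥ 1} a_n t^{n-1} ∈ ℤ[[t]]`.
Then `f^{(p-1)} + f^p ≡ 0 (mod p)` (coefficientwise, as power series) if and only if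
`a_{np} ≡ a_n (mod p)` for all `n ≥ 1`; i.e. the `p`-curvature of `y' = f y` vanishes mod `p`
exactly when these congruences hold. -/
theorem p_curvature_vanishes_iff_congruences
    (p : ℕ) (hp : p.Prime) (a : ℕ → ℤ)
    (f : PowerSeries ℤ) (hf : f = PowerSeries.mk fun k => a (k + 1)) :
    (∀ k : ℕ, (p : ℤ) ∣
        PowerSeries.coeff k ((fun g => PowerSeries.derivative ℤ g)^[p - 1] f + f ^ p)) ↔
      ∀ n : ℕ, 1 ≤ n → a (n * p) ≡ a n [ZMOD p] := by
  have : Fact p.Prime := ⟨hp⟩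
  set φ := Int.castRingHom (ZMod p)
  calc (∀ k : ℕ, (p : ℤ) ∣ coeff k ((d⁄dX ℤ)^[p - 1] f + f ^ p))
        ↔ map φ ((d⁄dX ℤ)^[p - 1] f + f ^ p) = 0 := by
        simp only [PowerSeries.ext_iff, coeff_map, map_zero, φ, eq_intCast,
          ZMod.intCast_zmod_eq_zero_iff_dvd]
    _ ↔ ∀ m, coeff (p * m + (p - 1)) (map φ f) = coeff m (map φ f) := by
        rw [map_add, map_pow, map_iterate_derivative, iterate_derivative_pred_add_pow_eq_zero_iff]
    _ ↔ ∀ m, a ((m + 1) * p) ≡ a (m + 1) [ZMOD p] := by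
        refine forall_congr' fun m => ?_
        have hidx : p * m + (p - 1) + 1 = (m + 1) * p := by
          rw [add_assoc, Nat.sub_add_cancel hp.one_le]; ring
        rw [← ZMod.intCast_eq_intCast_iff, hf]
        simp only [coeff_map, coeff_mk, φ, eq_intCast, hidx]
    _ ↔ ∀ n, 1 ≤ n → a (n * p) ≡ a n [ZMOD p] :=
        ⟨fun h n hn => by obtain ⟨m, rfl⟩ := Nat.exists_eq_add_of_le' hn; exact h m,
          fun h m => h (m + 1) m.succ_pos⟩
end

section
/- Let p be a prime and let f = ∑_{n≥1} a_n t^{n-1} ∈ 𝔽_p[[t]] be a power series with coefficients a_n ∈ 𝔽_p. Then f^{(p-1)} + f^p = 0 in 𝔽_p[[t]] if and only if a_{np} = a_n for all n ≥ 1. -/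
/-!
Writing `f = ∑ c_k t^k`, the `m`-th coefficient of `f^{(p-1)}` is `(m+1)⋯(m+p-1) · c_{m+p-1}`.
These `p - 1` consecutive factors contain a multiple of `p` unless `p ∣ m`, in which case they
run over all nonzero residues and their product is `-1` by Wilson's theorem. Over `𝔽_p` the
Frobenius gives `f^p = f(t^p)`, so `f^{(p-1)} + f^p = g(t^p)` with `g = ∑ (c_k - c_{pk+p-1}) t^k`,
and it vanishes iff `c_k = c_{pk+p-1}`, i.e. `a_{k+1} = a_{(k+1)p}`.
-/

open PowerSeries

theorem ZMod.natCast_ascFactorial_sub_one (p : ℕ) [Fact p.Prime] (n : ℕ) :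
    ((n + 1).ascFactorial (p - 1) : ZMod p) = if p ∣ n then -1 else 0 := by
  rw [Nat.cast_ascFactorial]
  split_ifs with h
  · rw [Nat.cast_succ, (ZMod.natCast_eq_zero_iff n p).mpr h, zero_add, ← Nat.cast_one,
      ← Nat.cast_ascFactorial, Nat.one_ascFactorial, ZMod.wilsons_lemma, Nat.cast_one]
  · have hlt : n % p < p := Nat.mod_lt n (Fact.out : p.Prime).pos
    have hpos : 0 < n % p := Nat.pos_of_ne_zero fun h0 => h (Nat.dvd_of_mod_eq_zero h0)
    have hneg : ((n + 1 : ℕ) : ZMod p) = -((p - 1 - n % p : ℕ) : ZMod p) := by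
      rw [eq_neg_iff_add_eq_zero, ← Nat.cast_add, ZMod.natCast_eq_zero_iff]
      exact ⟨n / p + 1, by rw [mul_add, mul_one]; have := Nat.mod_add_div n p; omega⟩
    rw [hneg, ascPochhammer_eval_neg_coe_nat_of_lt (by omega)]

namespace PowerSeries

theorem map_frobenius_expand {R : Type*} [CommRing R] (p : ℕ) (hp : p ≠ 0) [ExpChar R p]
    (f : R⟦X⟧) : map (frobenius R p) (expand p hp f) = f ^ p :=
  MvPowerSeries.map_frobenius_expand p hp

theorem expand_eq_zero_iff {R : Type*} [CommRing R] (p : ℕ) (hp : p ≠ 0) {f : R⟦X⟧} :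
    expand p hp f = 0 ↔ f = 0 := by
  refine ⟨fun h => ?_, fun h => by rw [h, map_zero]⟩
  ext n
  rw [← coeff_expand_mul p hp, h, map_zero, map_zero]

section ZMod

variable (p : ℕ) [Fact p.Prime]

theorem pow_card_eq_expand (f : (ZMod p)⟦X⟧) :
    f ^ p = expand p (Fact.out : p.Prime).ne_zero f := by
  rw [← map_frobenius_expand, ZMod.frobenius_zmod, map_id, id]

theorem iterate_derivative_sub_one_add_pow_eq_expand (f : (ZMod p)⟦X⟧) :
    (d⁄dX (ZMod p))^[p - 1] f + f ^ p =
      expand p (Fact.out : p.Prime).ne_zero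
        (mk fun k => coeff k f - coeff (p * k + (p - 1)) f) := by
  ext n
  rw [map_add, coeff_iterate_derivative, ZMod.natCast_ascFactorial_sub_one, pow_card_eq_expand,
    coeff_expand, coeff_expand]
  split_ifs with h
  · obtain ⟨k, rfl⟩ := h
    simp only [neg_mul, one_mul, Nat.mul_div_cancel_left k (Fact.out : p.Prime).pos, coeff_mk]
    ring
  · simp

end ZMod

end PowerSeries

/-- Let `p` be prime and `f = ∑_{n ≥ 1} a_n t^{n-1} ∈ 𝔽_p[[t]]` with `a_n ∈ 𝔽_p`.  Then
`f^{(p-1)} + f^p = 0` in `𝔽_p[[t]]` if and only if `a_{np} = a_n` for all `n ≥ 1`. -/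
theorem p_curvature_zero_iff_frobenius_fixed
    (p : ℕ) (hp : p.Prime) (a : ℕ → ZMod p)
    (f : PowerSeries (ZMod p)) (hf : f = PowerSeries.mk fun k => a (k + 1)) :
    (fun g => PowerSeries.derivative (ZMod p) g)^[p - 1] f + f ^ p = 0 ↔
      ∀ n : ℕ, 1 ≤ n → a (n * p) = a n := by
  have : Fact p.Prime := ⟨hp⟩
  have hindex (k : ℕ) : p * k + (p - 1) + 1 = (k + 1) * p := by
    have := hp.one_le
    rw [add_mul, one_mul, mul_comm]
    omega
  rw [iterate_derivative_sub_one_add_pow_eq_expand, expand_eq_zero_iff, PowerSeries.ext_iff]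
  simp only [hf, coeff_mk, map_zero, sub_eq_zero, hindex]
  refine ⟨fun h n hn => ?_, fun h k => (h (k + 1) k.succ_pos).symm⟩
  obtain ⟨k, rfl⟩ := Nat.exists_eq_add_of_le' hn
  exact (h k).symm
end

section
/- The formal power series exp(arctan t) = exp(∑_{k≥0} (−1)^k t^{2k+1}/(2k+1)) ∈ ℚ[[t]], which is the unique power series solution with constant term 1 of the differential equation y'(t) = y(t)/(1+t²), is transcendental (not algebraic) over ℚ(t). -/
/-!
Suppose `P(t, y) = ∑ aₖ(t) yᵏ = 0` with `P ≠ 0` of minimal `Y`-degree `n`, where `p = 1 + t²`;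
then `n ≥ 1`, and `a₀ ≠ 0` since otherwise `P / Y` would be a smaller relation. Differentiating
and using `p y' = y` shows that `∑ (p aₖ' + k aₖ) yᵏ = 0` as well; eliminating the leading term
between the two relations and using minimality gives `aₙ (p a₀') = (p aₙ' + n aₙ) a₀`, i.e.
`p · W(aₙ, a₀) = n aₙ a₀` for the Wronskian `W`. Splitting off the largest powers of the prime `p`
from `aₙ` and `a₀` turns this into `p ∣ n + m p'` for some integer `m`, impossible since
`deg p ≥ 2`.
-/

open Polynomial
open scoped PowerSeries

theorem Polynomial.coe_natCast {R : Type*} [CommSemiring R] (n : ℕ) :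
    ((n : R[X]) : R⟦X⟧) = n :=
  map_natCast coeToPowerSeries.ringHom n

theorem PowerSeries.algebraMap_polynomial {R : Type*} [CommSemiring R] :
    algebraMap R[X] R⟦X⟧ = coeToPowerSeries.ringHom :=
  RingHom.ext fun a => by simp [PowerSeries.algebraMap_apply']

theorem mul_derivative_pow_mul {R : Type*} [CommSemiring R] (p u : R[X]) (a : ℕ) :
    p * derivative (p ^ a * u) = p ^ a * ((a : R[X]) * derivative p * u + p * derivative u) := by
  cases a with
  | zero => simp
  | succ a => simp only [derivative_mul, derivative_pow, C_eq_natCast]; push_cast; ring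

section Wronskian

variable {K : Type*} [Field K] [CharZero K] {p : K[X]}

theorem not_dvd_C_add_intCast_mul_derivative (hp : 2 ≤ p.natDegree) {c : K} (hc : c ≠ 0)
    (m : ℤ) : ¬p ∣ C c + (m : K[X]) * derivative p := by
  intro hdvd
  have hp0 : p ≠ 0 := by rintro rfl; simp at hp
  have hq : C c + (m : K[X]) * derivative p ≠ 0 := by
    intro hq
    have hcoeff := congrArg (coeff · (p.natDegree - 1)) hq
    simp only [coeff_add, coeff_C, ← C_eq_intCast, coeff_C_mul, coeff_derivative,
      coeff_zero] at hcoeff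
    rw [if_neg (by omega), Nat.sub_add_cancel (by omega)] at hcoeff
    obtain rfl : m = 0 := by simpa [hp0, Nat.cast_add_one_ne_zero] using hcoeff
    simp [hc] at hq
  have hle := natDegree_le_of_dvd hdvd hq
  have hlt : (C c + (m : K[X]) * derivative p).natDegree ≤ p.natDegree - 1 := by
    refine (natDegree_add_le _ _).trans (max_le (by simp) ?_)
    rw [← C_eq_intCast]
    exact (natDegree_C_mul_le _ _).trans (natDegree_derivative_le p)
  omega

theorem mul_wronskian_ne_C_mul (hp : Prime p) (hp2 : 2 ≤ p.natDegree) {c : K} (hc : c ≠ 0)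
    {f g : K[X]} (hf : f ≠ 0) (hg : g ≠ 0) : p * wronskian f g ≠ C c * (f * g) := by
  obtain ⟨a, u, hpu, rfl⟩ := WfDvdMonoid.max_power_factor' hf hp.not_isUnit
  obtain ⟨b, v, hpv, rfl⟩ := WfDvdMonoid.max_power_factor' hg hp.not_isUnit
  intro h
  have hreduced : p * wronskian u v = (C c + ((a - b : ℤ) : K[X]) * derivative p) * (u * v) := by
    refine mul_left_cancel₀ (pow_ne_zero (a + b) hp.ne_zero) ?_
    have hf' := mul_derivative_pow_mul p u a
    have hg' := mul_derivative_pow_mul p v b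
    simp only [wronskian] at h ⊢
    push_cast
    linear_combination (p ^ b * v) * hf' - (p ^ a * u) * hg' + h
  have hdvd : p ∣ (C c + ((a - b : ℤ) : K[X]) * derivative p) * (u * v) := ⟨_, hreduced.symm⟩
  rcases hp.dvd_or_dvd hdvd with hq | huv
  · exact not_dvd_C_add_intCast_mul_derivative hp2 hc _ hq
  · rcases hp.dvd_or_dvd huv with hu | hv
    · exact hpu hu
    · exact hpv hv

end Wronskian

section TwistedDerivative

variable {R : Type*} [CommRing R]

/-- The derivation `p ∂/∂t + Y ∂/∂Y` of `R[t][Y]`. -/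
noncomputable def twistedDerivative (p : R[X]) (P : R[X][X]) : R[X][X] :=
  ∑ k ∈ Finset.range (P.natDegree + 1), monomial k (p * derivative (P.coeff k) + k * P.coeff k)

theorem coeff_twistedDerivative (p : R[X]) (P : R[X][X]) (k : ℕ) :
    (twistedDerivative p P).coeff k = p * derivative (P.coeff k) + k * P.coeff k := by
  simp only [twistedDerivative, finsetSum_coeff, coeff_monomial, Finset.sum_ite_eq',
    Finset.mem_range]
  split_ifs with hk
  · rfl
  · simp [coeff_eq_zero_of_natDegree_lt (by omega : P.natDegree < k)]

theorem natDegree_twistedDerivative_le (p : R[X]) (P : R[X][X]) :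
    (twistedDerivative p P).natDegree ≤ P.natDegree :=
  natDegree_le_iff_coeff_eq_zero.mpr fun k hk => by
    simp [coeff_twistedDerivative, coeff_eq_zero_of_natDegree_lt hk]

theorem aeval_twistedDerivative {p : R[X]} {y : R⟦X⟧} (hy : (p : R⟦X⟧) * d⁄dX R y = y)
    (P : R[X][X]) : aeval y (twistedDerivative p P) = p * d⁄dX R (aeval y P) := by
  simp only [twistedDerivative, map_sum, aeval_monomial, aeval_eq_sum_range (p := P),
    Finset.mul_sum, Algebra.smul_def, PowerSeries.algebraMap_polynomial,
    coeToPowerSeries.ringHom_apply]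
  refine Finset.sum_congr rfl fun k _ => ?_
  rw [Derivation.leibniz, Derivation.leibniz_pow, PowerSeries.derivative_coe]
  cases k with
  | zero => simp
  | succ k =>
    simp only [coe_add, coe_mul, coe_natCast, smul_eq_mul, nsmul_eq_mul, Nat.add_sub_cancel]
    push_cast
    linear_combination (-((k : R⟦X⟧) + 1) * (P.coeff (k + 1) : R⟦X⟧) * y ^ k) * hy

end TwistedDerivative

section Transcendence

variable {K : Type*} [Field K] [CharZero K] {p : K[X]} {y : K⟦X⟧}

theorem exists_natDegree_lt_aeval_eq_zero (hp : Prime p) (hp2 : 2 ≤ p.natDegree)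
    (hy : (p : K⟦X⟧) * d⁄dX K y = y) (hy0 : y ≠ 0) {P : K[X][X]} (hP : P ≠ 0)
    (hPy : aeval y P = 0) : ∃ Q : K[X][X], Q ≠ 0 ∧ aeval y Q = 0 ∧ Q.natDegree < P.natDegree := by
  set n := P.natDegree
  have hn : n ≠ 0 := by
    intro hn
    rw [eq_C_of_natDegree_eq_zero hn, aeval_C, PowerSeries.algebraMap_polynomial,
      coeToPowerSeries.ringHom_apply, coe_eq_zero_iff] at hPy
    exact hP (by rw [eq_C_of_natDegree_eq_zero hn, hPy, map_zero])
  by_cases h0 : P.coeff 0 = 0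
  · obtain ⟨Q, rfl⟩ := X_dvd_iff.mpr h0
    have hQ : Q ≠ 0 := right_ne_zero_of_mul hP
    refine ⟨Q, hQ, ?_, by simp [n, natDegree_X_mul hQ]⟩
    simpa [hy0] using hPy
  set R := twistedDerivative p P
  -- `S` has no `Yⁿ` term; if it vanishes, its constant coefficient is `p W(aₙ, a₀) = n aₙ a₀`.
  set S := C (P.coeff n) * R - C (R.coeff n) * P
  have hSy : aeval y S = 0 := by simp [S, R, aeval_twistedDerivative hy, hPy]
  by_cases hS : S = 0
  · have hcoeff := congrArg (coeff · 0) hS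
    simp only [S, R, coeff_sub, coeff_C_mul, coeff_twistedDerivative, coeff_zero] at hcoeff
    refine absurd ?_ (mul_wronskian_ne_C_mul hp hp2 (Nat.cast_ne_zero.mpr hn)
      (f := P.coeff n) (leadingCoeff_ne_zero.mpr hP) h0)
    simp only [wronskian, C_eq_natCast]
    push_cast at hcoeff
    linear_combination hcoeff
  · have hSn : S.natDegree ≤ n := by
      refine (natDegree_sub_le _ _).trans (max_le ?_ ?_)
      · exact (natDegree_C_mul_le _ _).trans (natDegree_twistedDerivative_le p P)
      · exact natDegree_C_mul_le _ _
    have hSn' : S.coeff n = 0 := by simp only [S, coeff_sub, coeff_C_mul]; ring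
    refine ⟨S, hS, hSy, lt_of_le_of_ne hSn fun h => hS ?_⟩
    rwa [← leadingCoeff_eq_zero, leadingCoeff, h]

theorem transcendental_of_mul_derivative_eq_self (hp : Prime p) (hp2 : 2 ≤ p.natDegree)
    (hy : (p : K⟦X⟧) * d⁄dX K y = y) (hy0 : y ≠ 0) : Transcendental K[X] y := by
  rintro ⟨P, hP, hPy⟩
  induction hn : P.natDegree using Nat.strong_induction_on generalizing P with
  | _ n ih =>
    obtain ⟨Q, hQ, hQy, hlt⟩ := exists_natDegree_lt_aeval_eq_zero hp hp2 hy hy0 hP hPy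
    exact ih _ (hn ▸ hlt) Q hQ hQy rfl

end Transcendence

theorem natDegree_one_add_X_sq {K : Type*} [Field K] : (1 + X ^ 2 : K[X]).natDegree = 2 := by
  compute_degree!

theorem prime_one_add_X_sq {K : Type*} [Field K] [LinearOrder K] [IsStrictOrderedRing K] :
    Prime (1 + X ^ 2 : K[X]) := by
  refine Irreducible.prime ?_
  rw [irreducible_iff_roots_eq_zero_of_degree_le_three natDegree_one_add_X_sq.ge
    (by rw [natDegree_one_add_X_sq]; norm_num), Multiset.eq_zero_iff_forall_notMem]
  intro a ha
  exact (by positivity : (1 + a ^ 2 : K) ≠ 0) (by simpa using isRoot_of_mem_roots ha)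

open PowerSeries

/-- A formal power series `g ∈ ℚ[[t]]` is algebraic over `ℚ(t)` if there exists a nonzero
polynomial `P ∈ ℚ[x][y]` with `P(t, g(t)) = 0`. -/
def IsAlgebraicPS (g : PowerSeries ℚ) : Prop :=
  ∃ P : Polynomial (Polynomial ℚ), P ≠ 0 ∧
    Polynomial.eval₂ Polynomial.coeToPowerSeries.ringHom g P = 0

/-- The formal power series `exp(arctan t) ∈ ℚ[[t]]`, i.e. the unique power series solution
with constant term `1` of the differential equation `y'(t) = y(t)/(1+t²)`, equivalently
`(1 + t²) y'(t) = y(t)`, is transcendental (not algebraic) over `ℚ(t)`. -/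
theorem exp_arctan_transcendental
    (y : PowerSeries ℚ)
    (hy0 : PowerSeries.constantCoeff y = 1)
    (hy : (1 + PowerSeries.X ^ 2) * PowerSeries.derivative ℚ y = y) :
    ¬ IsAlgebraicPS y := by
  rintro ⟨P, hP, hPy⟩
  have hy' : ((1 + Polynomial.X ^ 2 : ℚ[X]) : ℚ⟦X⟧) * d⁄dX ℚ y = y := by simpa using hy
  have hyne : y ≠ 0 := by rintro rfl; simp at hy0
  refine transcendental_of_mul_derivative_eq_self prime_one_add_X_sq
    natDegree_one_add_X_sq.ge hy' hyne ⟨P, hP, ?_⟩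
  rwa [aeval_def, algebraMap_polynomial]
end
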